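/- arXiv:2408.17246 — 8 statements merged into one kernel-verified Lean document; each statement's English description precedes it below -/
import Mathlib

section
/- Let n ≥ 1, let V : ℝⁿ → ℝ be twice continuously differentiable on a neighborhood of 0 with V 0 = 0 and fderiv ℝ V 0 = 0, and let H denote the Hessian bilinear form of V at 0 (the second iterated Fréchet derivative of V at 0). Let f : ℝⁿ → ℝⁿ be differentiable at 0 with f 0 = 0 and let A := fderiv ℝ f 0. Assume there exists r > 0 such that for every x with 0 < ‖x‖ < r one has (fderiv ℝ V x) (f x) < 0. Then for every v ∈ ℝⁿ, H(v, A v) ≤ 0 (equivalently, the quadratic form v ↦ vᵀ(AᵀH + HA)v is negative semidefinite). -/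
/-!
Since `∇V(x) = H x + o(‖x‖)` and `f(x) = A x + o(‖x‖)`, the orbital derivative
`∇V(x)(f x)` equals `H(x, A x) + o(‖x‖²)`. On the ray `x = t • v` this reads
`t² H(v, A v) + o(t²)`, and its negativity for small `t > 0` forces `H(v, A v) ≤ 0`.
-/

open Filter Topology Asymptotics

section

variable {𝕜 E F G : Type*} [NontriviallyNormedField 𝕜] [NormedAddCommGroup E] [NormedSpace 𝕜 E]
  [NormedAddCommGroup F] [NormedSpace 𝕜 F] [NormedAddCommGroup G] [NormedSpace 𝕜 G]

theorem HasFDerivAt.isLittleO_clm_apply_sub_sq {φ : E → F →L[𝕜] G} {f : E → F}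
    {B : E →L[𝕜] F →L[𝕜] G} {A : E →L[𝕜] F} (hφ : HasFDerivAt φ B 0) (hφ0 : φ 0 = 0)
    (hf : HasFDerivAt f A 0) (hf0 : f 0 = 0) :
    (fun x => φ x (f x) - B x (A x)) =o[𝓝 0] fun x => ‖x‖ ^ 2 := by
  have hφo : (fun x => φ x - B x) =o[𝓝 0] fun x => x := by simpa [hφ0] using hφ.isLittleO
  have hfo : (fun x => f x - A x) =o[𝓝 0] fun x => x := by simpa [hf0] using hf.isLittleO
  have hfO : (fun x => f x) =O[𝓝 0] fun x => x := by simpa [hf0] using hf.isBigO_sub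
  have hBO : (fun x => B x) =O[𝓝 0] fun x => x := B.isBigO_id _
  have h₁ : (fun x => (φ x - B x) (f x)) =o[𝓝 0] fun x => ‖x‖ * ‖x‖ :=
    (IsBigO.of_norm_le fun x => (φ x - B x).le_opNorm (f x)).trans_isLittleO
      (hφo.norm_norm.mul_isBigO hfO.norm_norm)
  have h₂ : (fun x => B x (f x - A x)) =o[𝓝 0] fun x => ‖x‖ * ‖x‖ :=
    (IsBigO.of_norm_le fun x => (B x).le_opNorm (f x - A x)).trans_isLittleO
      (hBO.norm_norm.mul_isLittleO hfo.norm_norm)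
  simpa only [sq, sub_apply, map_sub, sub_add_sub_cancel] using h₁.add h₂

end

theorem nonpos_of_isLittleO_sub_mul_sq {h : ℝ → ℝ} {c : ℝ}
    (ho : (fun t => h t - t ^ 2 * c) =o[𝓝[>] 0] fun t => t ^ 2)
    (hneg : ∀ᶠ t in 𝓝[>] 0, h t < 0) : c ≤ 0 := by
  have hlim : Tendsto (fun t => h t / t ^ 2) (𝓝[>] 0) (𝓝 c) := by
    have := ho.tendsto_div_nhds_zero.add_const c
    rw [zero_add] at this
    refine this.congr' ?_
    filter_upwards [self_mem_nhdsWithin] with t (ht : 0 < t)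
    field_simp
    ring
  refine le_of_tendsto hlim ?_
  filter_upwards [hneg, self_mem_nhdsWithin] with t ht ht0
  exact div_nonpos_of_nonpos_of_nonneg ht.le (sq_nonneg t)

theorem nonpos_of_isLittleO_sub_of_eventually_neg {E : Type*} [NormedAddCommGroup E]
    [NormedSpace ℝ E] {g q : E → ℝ} (hq : ∀ (t : ℝ) x, q (t • x) = t ^ 2 * q x)
    (ho : (fun x => g x - q x) =o[𝓝 0] fun x => ‖x‖ ^ 2) (hneg : ∀ᶠ x in 𝓝[≠] 0, g x < 0)
    (v : E) : q v ≤ 0 := by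
  rcases eq_or_ne v 0 with rfl | hv
  · exact (by simpa using hq 0 0 : q 0 = 0).le
  have hray : Tendsto (fun t : ℝ => t • v) (𝓝[>] 0) (𝓝[≠] 0) := by
    refine tendsto_nhdsWithin_iff.2 ⟨?_, ?_⟩
    · exact ((continuous_id.smul continuous_const).tendsto' (0 : ℝ) (0 : E)
        (zero_smul ℝ v)).mono_left nhdsWithin_le_nhds
    · filter_upwards [self_mem_nhdsWithin] with t (ht : 0 < t)
      exact smul_ne_zero ht.ne' hv
  refine nonpos_of_isLittleO_sub_mul_sq (h := fun t => g (t • v)) ?_ (hray.eventually hneg)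
  have hnorm : (fun t : ℝ => ‖t • v‖ ^ 2) =O[𝓝[>] 0] fun t => t ^ 2 :=
    IsBigO.of_bound (‖v‖ ^ 2) (Eventually.of_forall fun t => by
      simp [norm_smul, mul_pow, mul_comm])
  simpa only [Function.comp_def, hq] using
    (ho.comp_tendsto (hray.mono_right nhdsWithin_le_nhds)).trans_isBigO hnorm

theorem lyapunov_hessian_lyapunov_inequality_general
    (n : ℕ)
    (V : EuclideanSpace ℝ (Fin n) → ℝ)
    (U : Set (EuclideanSpace ℝ (Fin n))) (hU : IsOpen U) (h0U : (0 : EuclideanSpace ℝ (Fin n)) ∈ U)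
    (hV : ContDiffOn ℝ 2 V U)
    (hdV0 : fderiv ℝ V 0 = 0)
    (f : EuclideanSpace ℝ (Fin n) → EuclideanSpace ℝ (Fin n))
    (hf : DifferentiableAt ℝ f 0)
    (hf0 : f 0 = 0)
    (r : ℝ) (hr : 0 < r)
    (hdec : ∀ x : EuclideanSpace ℝ (Fin n), 0 < ‖x‖ → ‖x‖ < r → fderiv ℝ V x (f x) < 0) :
    ∀ v : EuclideanSpace ℝ (Fin n),
      iteratedFDeriv ℝ 2 V 0 ![v, fderiv ℝ f 0 v] ≤ 0 := by
  intro v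
  set B := fderiv ℝ (fderiv ℝ V) 0
  have hB : HasFDerivAt (fderiv ℝ V) B 0 :=
    ((hV.contDiffAt (hU.mem_nhds h0U)).fderiv_right (m := 1) le_rfl).differentiableAt
      one_ne_zero |>.hasFDerivAt
  have hneg : ∀ᶠ x in 𝓝[≠] 0, fderiv ℝ V x (f x) < 0 := by
    filter_upwards [nhdsWithin_le_nhds (Metric.ball_mem_nhds 0 hr), self_mem_nhdsWithin]
      with x hxr hx0
    exact hdec x (norm_pos_iff.2 hx0) (mem_ball_zero_iff.1 hxr)
  rw [iteratedFDeriv_two_apply]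
  refine nonpos_of_isLittleO_sub_of_eventually_neg (q := fun x => B x (fderiv ℝ f 0 x))
    (fun t x => ?_) (hB.isLittleO_clm_apply_sub_sq hdV0 hf.hasFDerivAt hf0) hneg v
  simp only [map_smul, smul_apply, smul_eq_mul]
  ring

/-- Lemma 1, part 2: if `V` is `C²` near `0` with `V 0 = 0`, `∇V(0) = 0`, and the
orbital derivative `(fderiv ℝ V x) (f x)` is negative for all small nonzero `x`,
then the Hessian `H` of `V` at `0` satisfies `H(v, A v) ≤ 0` for every `v`,
where `A = fderiv ℝ f 0`. -/
theorem lyapunov_hessian_lyapunov_inequality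
    (n : ℕ) (hn : 1 ≤ n)
    (V : EuclideanSpace ℝ (Fin n) → ℝ)
    (U : Set (EuclideanSpace ℝ (Fin n))) (hU : IsOpen U) (h0U : (0 : EuclideanSpace ℝ (Fin n)) ∈ U)
    (hV : ContDiffOn ℝ 2 V U)
    (hV0 : V 0 = 0)
    (hdV0 : fderiv ℝ V 0 = 0)
    (f : EuclideanSpace ℝ (Fin n) → EuclideanSpace ℝ (Fin n))
    (hf : DifferentiableAt ℝ f 0)
    (hf0 : f 0 = 0)
    (r : ℝ) (hr : 0 < r)
    (hdec : ∀ x : EuclideanSpace ℝ (Fin n), 0 < ‖x‖ → ‖x‖ < r → fderiv ℝ V x (f x) < 0) :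
    ∀ v : EuclideanSpace ℝ (Fin n),
      iteratedFDeriv ℝ 2 V 0 ![v, fderiv ℝ f 0 v] ≤ 0 :=
  lyapunov_hessian_lyapunov_inequality_general n V U hU h0U hV hdV0 f hf hf0 r hr hdec
end

section
/- Let n ≥ 1, let D ⊆ ℝⁿ be open and bounded with 0 ∈ D, let f : ℝⁿ → ℝⁿ be continuous, and let V : ℝⁿ → ℝ be continuous on the closure of D and continuously differentiable on D, with V 0 = 0, V x > 0 for all x ∈ D \ {0}, and (fderiv ℝ V x) (f x) < 0 for all x ∈ D \ {0} with V x < 1. Let x₀ ∈ D with V x₀ < 1, assume the sublevel set {x ∈ closure D | V x ≤ V x₀} is contained in D, and let X : ℝ → ℝⁿ satisfy X 0 = x₀, HasDerivAt X (f (X t)) t for all t ≥ 0, and X t ∈ D for all t ≥ 0. Then V (X t) ≤ V x₀ for all t ≥ 0 (in particular X t remains in the basin {x ∈ D | V x < 1}), and X t → 0 as t → ∞. -/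
/-!
Along the trajectory, `V ∘ X` has derivative `dV (X t) (f (X t))`, which is nonpositive as long as
`V (X t) < 1`. A fence argument shows that `V ∘ X` never reaches `1`, so it is nonincreasing and the
trajectory stays in the compact sublevel set `K = {x ∈ closure D | V x ≤ V x₀} ⊆ D`. On the compact
part of `K` where `V ≥ ε` the orbital derivative is bounded above by some `-m < 0`, so `V ∘ X`
cannot stay above `ε` forever; hence `V (X t) → 0`, and since `V` is positive on `K \ {0}`,
compactness forces `X t → 0`.
-/

open Filter Topology Set

lemma lt_of_hasDerivAt_nonpos_of_lt {g g' : ℝ → ℝ} {a b : ℝ}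
    (hg : ∀ t, a ≤ t → HasDerivAt g (g' t) t) (hg' : ∀ t, a ≤ t → g t < b → g' t ≤ 0)
    (ha : g a < b) {T : ℝ} (hT : a ≤ T) : g T < b := by
  have hTa : 0 < T - a + 1 := by linarith
  -- a fence of positive slope makes the comparison strict while staying below `b` on `[a, T]`
  set r := (b - g a) / (2 * (T - a + 1))
  have hr : 0 < r := div_pos (sub_pos.2 ha) (by positivity)
  have hrT : ∀ t ∈ Icc a T, g a + r * (t - a) < b := by
    intro t ht
    have : r * (T - a + 1) = (b - g a) / 2 := by
      simp only [r]; field_simp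
    nlinarith [ht.2]
  have hfence : ∀ t ∈ Icc a T, g t ≤ g a + r * (t - a) := by
    refine image_le_of_deriv_right_lt_deriv_boundary (B' := fun _ => r)
      (fun t ht => (hg t ht.1).continuousAt.continuousWithinAt)
      (fun t ht => (hg t ht.1).hasDerivWithinAt) (by simp) (fun t => ?_) ?_
    · simpa using ((hasDerivAt_id t).sub_const a).const_mul r |>.const_add (g a)
    · intro t ht heq
      exact (hg' t ht.1 (heq ▸ hrT t (Ico_subset_Icc_self ht))).trans_lt hr
  exact (hfence T ⟨hT, le_rfl⟩).trans_lt (hrT T ⟨hT, le_rfl⟩)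

lemma antitoneOn_of_hasDerivAt_nonpos_of_lt {g g' : ℝ → ℝ} {a b : ℝ}
    (hg : ∀ t, a ≤ t → HasDerivAt g (g' t) t) (hg' : ∀ t, a ≤ t → g t < b → g' t ≤ 0)
    (ha : g a < b) : AntitoneOn g (Ici a) := by
  refine antitoneOn_of_hasDerivWithinAt_nonpos (f' := g') (convex_Ici a)
    (fun t ht => (hg t ht).continuousAt.continuousWithinAt) (fun t ht => ?_) fun t ht => ?_
  all_goals rw [interior_Ici] at ht
  · exact (hg t ht.le).hasDerivWithinAt
  · exact hg' t ht.le (lt_of_hasDerivAt_nonpos_of_lt hg hg' ha ht.le)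

lemma tendsto_zero_of_hasDerivAt_le_neg {g g' : ℝ → ℝ} {a : ℝ}
    (hg : ∀ t, a ≤ t → HasDerivAt g (g' t) t) (hanti : AntitoneOn g (Ici a))
    (hnonneg : ∀ t, a ≤ t → 0 ≤ g t)
    (hdecay : ∀ ε > 0, ∃ m > 0, ∀ t, a ≤ t → ε ≤ g t → g' t ≤ -m) :
    Tendsto g atTop (𝓝 0) := by
  refine tendsto_order.2 ⟨fun δ hδ => ?_, fun ε hε => ?_⟩
  · filter_upwards [eventually_ge_atTop a] with t ht using hδ.trans_le (hnonneg t ht)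
  obtain ⟨m, hm, hg'⟩ := hdecay ε hε
  obtain ⟨T, hT, hgT⟩ : ∃ T, a ≤ T ∧ g T < ε := by
    by_contra! hbig
    set T := a + g a / m
    have hTa : a ≤ T := le_add_of_nonneg_right (div_nonneg (hnonneg a le_rfl) hm.le)
    have hlin : ∀ t ∈ Icc a T, g t ≤ g a - m * (t - a) :=
      image_le_of_deriv_right_le_deriv_boundary (B' := fun _ => -m)
        (fun t ht => (hg t ht.1).continuousAt.continuousWithinAt)
        (fun t ht => (hg t ht.1).hasDerivWithinAt) (by simp) (by fun_prop)
        (fun t _ => by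
          simpa using ((((hasDerivAt_id t).sub_const a).const_mul m).const_sub (g a)).hasDerivWithinAt)
        fun t ht => hg' t ht.1 (hbig t ht.1)
    have : g a - m * (T - a) = 0 := by simp only [T]; field_simp; ring
    linarith [hlin T ⟨hTa, le_rfl⟩, hbig T hTa]
  filter_upwards [eventually_ge_atTop T] with t ht using (hanti hT (hT.trans ht) ht).trans_lt hgT

lemma IsCompact.exists_pos_forall_le_neg {E : Type*} [TopologicalSpace E] [T2Space E]
    {K : Set E} (hK : IsCompact K) {V w : E → ℝ} (hV : ContinuousOn V K)
    (hw : ContinuousOn w K) (hneg : ∀ x ∈ K, 0 < V x → w x < 0) {ε : ℝ} (hε : 0 < ε) :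
    ∃ m > 0, ∀ x ∈ K, ε ≤ V x → w x ≤ -m := by
  have hK' : IsCompact {x ∈ K | ε ≤ V x} :=
    hK.of_isClosed_subset (hV.preimage_isClosed_of_isClosed hK.isClosed isClosed_Ici)
      fun x hx => hx.1
  obtain ⟨m, hm, hle⟩ := hK'.exists_forall_le' (hw.neg.mono fun x hx => hx.1)
    fun x hx => neg_pos.2 (hneg x hx.1 (hε.trans_le hx.2))
  exact ⟨m, hm, fun x hx hεx => le_neg.2 (hle x ⟨hx, hεx⟩)⟩

lemma tendsto_nhds_of_tendsto_comp_nhds_zero {α E : Type*} [PseudoMetricSpace E] {K : Set E}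
    (hK : IsCompact K) {V : E → ℝ} (hV : ContinuousOn V K) {p : E}
    (hpos : ∀ x ∈ K, x ≠ p → 0 < V x) {l : Filter α} {u : α → E} (hu : ∀ᶠ i in l, u i ∈ K)
    (hVu : Tendsto (V ∘ u) l (𝓝 0)) : Tendsto u l (𝓝 p) := by
  refine Metric.tendsto_nhds.2 fun ε hε => ?_
  have hK' : IsCompact {x ∈ K | ε ≤ dist x p} :=
    hK.inter_right (isClosed_le continuous_const (continuous_id.dist continuous_const))
  obtain ⟨δ, hδ, hle⟩ := hK'.exists_forall_le' (hV.mono fun x hx => hx.1)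
    fun x hx => hpos x hx.1 fun hxp => (hε.trans_le hx.2).ne' (by rw [hxp, dist_self])
  filter_upwards [hu, hVu.eventually (gt_mem_nhds hδ)] with i hiK hiV
  by_contra! hfar
  exact (hle _ ⟨hiK, hfar⟩).not_gt hiV

theorem basin_of_attraction_general
    (n : ℕ)
    (D : Set (EuclideanSpace ℝ (Fin n))) (hD : IsOpen D)
    (hDb : Bornology.IsBounded D)
    (f : EuclideanSpace ℝ (Fin n) → EuclideanSpace ℝ (Fin n)) (hf : Continuous f)
    (V : EuclideanSpace ℝ (Fin n) → ℝ)
    (hVc : ContinuousOn V (closure D))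
    (hVd : ContDiffOn ℝ 1 V D)
    (hV0 : V 0 = 0)
    (hVpos : ∀ x ∈ D \ {(0 : EuclideanSpace ℝ (Fin n))}, 0 < V x)
    (hVdec : ∀ x ∈ D \ {(0 : EuclideanSpace ℝ (Fin n))}, V x < 1 → fderiv ℝ V x (f x) < 0)
    (x₀ : EuclideanSpace ℝ (Fin n)) (hVx₀ : V x₀ < 1)
    (hsub : {x ∈ closure D | V x ≤ V x₀} ⊆ D)
    (X : ℝ → EuclideanSpace ℝ (Fin n))
    (hX0 : X 0 = x₀)
    (hX : ∀ t : ℝ, 0 ≤ t → HasDerivAt X (f (X t)) t)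
    (hXD : ∀ t : ℝ, 0 ≤ t → X t ∈ D) :
    (∀ t : ℝ, 0 ≤ t → V (X t) ≤ V x₀) ∧
      Tendsto X atTop (𝓝 (0 : EuclideanSpace ℝ (Fin n))) := by
  have hVnonneg : ∀ x ∈ D, 0 ≤ V x := fun x hx => by
    rcases eq_or_ne x 0 with rfl | hx0
    exacts [hV0.ge, (hVpos x ⟨hx, hx0⟩).le]
  have hdV : ∀ x ∈ D, V x < 1 → fderiv ℝ V x (f x) ≤ 0 := fun x hx hx1 => by
    rcases eq_or_ne x 0 with rfl | hx0
    · have hmin : IsLocalMin V 0 :=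
        mem_of_superset (hD.mem_nhds hx) fun y hy => hV0 ▸ hVnonneg y hy
      simp [hmin.fderiv_eq_zero]
    · exact (hVdec x ⟨hx, hx0⟩ hx1).le
  have hderiv : ∀ t, 0 ≤ t → HasDerivAt (V ∘ X) (fderiv ℝ V (X t) (f (X t))) t := fun t ht =>
    ((hVd.differentiableOn one_ne_zero).differentiableAt (hD.mem_nhds (hXD t ht))).hasFDerivAt
      |>.comp_hasDerivAt t (hX t ht)
  have hanti : AntitoneOn (V ∘ X) (Ici 0) :=
    antitoneOn_of_hasDerivAt_nonpos_of_lt hderiv (fun t ht => hdV _ (hXD t ht))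
      (by simpa [hX0] using hVx₀)
  have hle : ∀ t, 0 ≤ t → V (X t) ≤ V x₀ := fun t ht => hX0 ▸ hanti self_mem_Ici ht ht
  set K := {x ∈ closure D | V x ≤ V x₀}
  have hXK : ∀ t, 0 ≤ t → X t ∈ K := fun t ht => ⟨subset_closure (hXD t ht), hle t ht⟩
  have hK : IsCompact K := hDb.isCompact_closure.of_isClosed_subset
    (hVc.preimage_isClosed_of_isClosed isClosed_closure isClosed_Iic) fun x hx => hx.1
  have hVK : ContinuousOn V K := hVc.mono fun x hx => hx.1
  have hwK : ContinuousOn (fun x => fderiv ℝ V x (f x)) K :=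
    ((hVd.continuousOn_fderiv_of_isOpen hD le_rfl).clm_apply hf.continuousOn).mono hsub
  have hwneg : ∀ x ∈ K, 0 < V x → fderiv ℝ V x (f x) < 0 := fun x hx hVx =>
    hVdec x ⟨hsub hx, fun hx0 => hVx.ne' (by rw [hx0, hV0])⟩ (hx.2.trans_lt hVx₀)
  have hVX : Tendsto (V ∘ X) atTop (𝓝 0) :=
    tendsto_zero_of_hasDerivAt_le_neg hderiv hanti (fun t ht => hVnonneg _ (hXD t ht))
      fun ε hε => by
        obtain ⟨m, hm, hwm⟩ := hK.exists_pos_forall_le_neg hVK hwK hwneg hε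
        exact ⟨m, hm, fun t ht hεt => hwm _ (hXK t ht) hεt⟩
  exact ⟨hle, tendsto_nhds_of_tendsto_comp_nhds_zero hK hVK
    (fun x hx hx0 => hVpos x ⟨hsub hx, hx0⟩) ((eventually_ge_atTop 0).mono hXK) hVX⟩

/-- Theorem 1 (Lyapunov characterization of a basin of attraction): if `V` is a local
Lyapunov function on the open bounded set `D`, `x₀ ∈ D` with `V x₀ < 1`, the sublevel set
`{x ∈ closure D | V x ≤ V x₀}` is contained in `D`, and `X` is a trajectory of `ẋ = f(x)`
starting at `x₀` that remains in `D`, then `V (X t) ≤ V x₀` for all `t ≥ 0` and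
`X t → 0` as `t → ∞`. -/
theorem basin_of_attraction
    (n : ℕ) (hn : 1 ≤ n)
    (D : Set (EuclideanSpace ℝ (Fin n))) (hD : IsOpen D)
    (hDb : Bornology.IsBounded D)
    (h0D : (0 : EuclideanSpace ℝ (Fin n)) ∈ D)
    (f : EuclideanSpace ℝ (Fin n) → EuclideanSpace ℝ (Fin n)) (hf : Continuous f)
    (V : EuclideanSpace ℝ (Fin n) → ℝ)
    (hVc : ContinuousOn V (closure D))
    (hVd : ContDiffOn ℝ 1 V D)
    (hV0 : V 0 = 0)
    (hVpos : ∀ x ∈ D \ {(0 : EuclideanSpace ℝ (Fin n))}, 0 < V x)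
    (hVdec : ∀ x ∈ D \ {(0 : EuclideanSpace ℝ (Fin n))}, V x < 1 → fderiv ℝ V x (f x) < 0)
    (x₀ : EuclideanSpace ℝ (Fin n)) (hx₀ : x₀ ∈ D) (hVx₀ : V x₀ < 1)
    (hsub : {x ∈ closure D | V x ≤ V x₀} ⊆ D)
    (X : ℝ → EuclideanSpace ℝ (Fin n))
    (hX0 : X 0 = x₀)
    (hX : ∀ t : ℝ, 0 ≤ t → HasDerivAt X (f (X t)) t)
    (hXD : ∀ t : ℝ, 0 ≤ t → X t ∈ D) :
    (∀ t : ℝ, 0 ≤ t → V (X t) ≤ V x₀) ∧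
      Tendsto X atTop (𝓝 (0 : EuclideanSpace ℝ (Fin n))) :=
  basin_of_attraction_general n D hD hDb f hf V hVc hVd hV0 hVpos hVdec x₀ hVx₀ hsub X hX0 hX hXD
end

section
/- Let n ≥ 1, let D ⊆ ℝⁿ be open and bounded with 0 ∈ D, let f : ℝⁿ → ℝⁿ be continuous, and let V : ℝⁿ → ℝ be continuous on the closure of D and continuously differentiable on D, with V 0 = 0. Assume: (i) there is an open neighborhood N of 0 such that V x > 0 for all x ∈ N \ {0}; (ii) (fderiv ℝ V x) (f x) < 0 for all x ∈ D \ {0} with V x < 1; (iii) V x ≥ 1 for all x in the frontier of D; and (iv) for every x ∈ D with V x < 1 there exists a function X : ℝ → ℝⁿ with X 0 = x, X t ∈ D for all t ≥ 0, and HasDerivAt X (f (X t)) t for all t ≥ 0. Then V x > 0 for all x ∈ D \ {0}. -/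
/-!
Suppose `V x < 0` for some `x ∈ D`. Because `V ≥ 1` on the frontier, the sublevel set
`K = {y ∈ closure D | V y ≤ V x}` is a compact subset of `D` avoiding `0`, so the Lie derivative
`y ↦ V'(y) (f y)` is bounded above on `K` by some `-ε < 0`. Along the trajectory from `x`, `V`
therefore stays below the line `V x - ε t / 2` (at a first crossing the trajectory would be in
`K`, where `V` falls faster), so it tends to `-∞`, contradicting the boundedness of `V` on the
compact set `closure D`. Hence `V ≥ 0` on `D`, and `V x = 0` with `x ≠ 0` is impossible too,
since `V` strictly decreases along the trajectory starting at `x`.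
-/

lemma HasDerivAt.exists_gt_lt_of_neg {g : ℝ → ℝ} {g' a : ℝ} (hg : HasDerivAt g g' a)
    (hg' : g' < 0) : ∃ t > a, g t < g a := by
  obtain ⟨t, hslope, hat⟩ :=
    (hg.hasDerivWithinAt.liminf_right_slope_le hg').and_eventually self_mem_nhdsWithin |>.exists
  exact ⟨t, hat, (slope_neg_iff_of_le (le_of_lt hat)).mp hslope⟩

lemma le_sub_mul_of_hasDerivAt_lt {g g' : ℝ → ℝ} {c ε : ℝ}
    (hg : ∀ t, 0 ≤ t → HasDerivAt g (g' t) t) (h0 : g 0 ≤ c)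
    (hbound : ∀ t, 0 ≤ t → g t = c - ε * t → g' t < -ε) :
    ∀ t, 0 ≤ t → g t ≤ c - ε * t := by
  intro t ht
  refine image_le_of_deriv_right_lt_deriv_boundary (a := 0) (b := t) (B' := fun _ ↦ -ε)
    (fun s hs ↦ (hg s hs.1).continuousAt.continuousWithinAt)
    (fun s hs ↦ (hg s hs.1).hasDerivWithinAt) (by simpa using h0)
    (fun s ↦ by simpa using ((hasDerivAt_id s).const_mul ε).const_sub c)
    (fun s hs ↦ hbound s hs.1) ⟨ht, le_rfl⟩

lemma sep_closure_subset_of_lt_frontier {α : Type*} [TopologicalSpace α] {D : Set α}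
    (hD : IsOpen D) {V : α → ℝ} {c : ℝ}
    (hVbd : ∀ x ∈ frontier D, c < V x) : {y ∈ closure D | V y ≤ c} ⊆ D := by
  rintro y ⟨hy, hVy⟩
  by_contra hyD
  exact (hVbd y (hD.frontier_eq ▸ ⟨hy, hyD⟩)).not_ge hVy

section

variable {E : Type*} [NormedAddCommGroup E] [NormedSpace ℝ E]

lemma hasDerivAt_comp_of_contDiffOn {D : Set E} (hD : IsOpen D) {V : E → ℝ}
    (hVd : ContDiffOn ℝ 1 V D) {X : ℝ → E} {v : E} {t : ℝ} (hX : HasDerivAt X v t)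
    (hXt : X t ∈ D) : HasDerivAt (fun s ↦ V (X s)) (fderiv ℝ V (X t) v) t :=
  ((hVd.differentiableOn one_ne_zero).differentiableAt (hD.mem_nhds hXt)).hasFDerivAt
    |>.comp_hasDerivAt t hX

theorem nonneg_of_lyapunov_decrease [ProperSpace E] {D : Set E} (hD : IsOpen D)
    (hDb : Bornology.IsBounded D) {f : E → E} (hf : Continuous f) {V : E → ℝ}
    (hVc : ContinuousOn V (closure D)) (hVd : ContDiffOn ℝ 1 V D) (hV0 : V 0 = 0)
    (hVdec : ∀ x ∈ D \ {0}, V x < 1 → fderiv ℝ V x (f x) < 0)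
    (hVbd : ∀ x ∈ frontier D, 1 ≤ V x)
    (htraj : ∀ x ∈ D, V x < 1 → ∃ X : ℝ → E, X 0 = x ∧ (∀ t : ℝ, 0 ≤ t → X t ∈ D) ∧
      (∀ t : ℝ, 0 ≤ t → HasDerivAt X (f (X t)) t)) :
    ∀ x ∈ D, 0 ≤ V x := by
  intro x hxD
  by_contra! hx
  set K := {y ∈ closure D | V y ≤ V x}
  have hclosD : IsCompact (closure D) := hDb.isCompact_closure
  have hKD : K ⊆ D := sep_closure_subset_of_lt_frontier hD fun y hy ↦ by linarith [hVbd y hy]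
  have hK : IsCompact K := hclosD.of_isClosed_subset
    (hVc.preimage_isClosed_of_isClosed isClosed_closure isClosed_Iic) fun y hy ↦ hy.1
  have hKdec : ∀ y ∈ K, 0 < -fderiv ℝ V y (f y) := by
    refine fun y hy ↦ neg_pos.mpr (hVdec y ⟨hKD hy, ?_⟩ (by linarith [hy.2]))
    rintro rfl
    linarith [hy.2]
  have hW : ContinuousOn (fun y ↦ -fderiv ℝ V y (f y)) K :=
    ((hVd.continuousOn_fderiv_of_isOpen hD le_rfl).clm_apply hf.continuousOn).neg.mono hKD
  obtain ⟨ε, hε, hKε⟩ := hK.exists_forall_le' hW hKdec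
  obtain ⟨X, hX0, hXD, hXd⟩ := htraj x hxD (by linarith)
  have hg := fun t ht ↦ hasDerivAt_comp_of_contDiffOn hD hVd (hXd t ht) (hXD t ht)
  have hdecay : ∀ t, 0 ≤ t → V (X t) ≤ V x - ε / 2 * t := by
    refine le_sub_mul_of_hasDerivAt_lt hg (by rw [hX0]) fun t ht hgt ↦ ?_
    have hXK : X t ∈ K := ⟨subset_closure (hXD t ht), by nlinarith⟩
    linarith [hKε _ hXK]
  obtain ⟨m, hm⟩ := hclosD.bddBelow_image hVc
  have hmx : m ≤ V x := hm ⟨x, subset_closure hxD, rfl⟩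
  obtain ⟨t, ht⟩ := exists_gt (2 * (V x - m) / ε)
  have ht0 : 0 ≤ t := (div_nonneg (by linarith) hε.le).trans ht.le
  have hmt : m ≤ V (X t) := hm ⟨X t, subset_closure (hXD t ht0), rfl⟩
  rw [div_lt_iff₀ hε] at ht
  linarith [hdecay t ht0]

end

theorem positive_definiteness_from_local_general
    (n : ℕ)
    (D : Set (EuclideanSpace ℝ (Fin n))) (hD : IsOpen D)
    (hDb : Bornology.IsBounded D)
    (f : EuclideanSpace ℝ (Fin n) → EuclideanSpace ℝ (Fin n)) (hf : Continuous f)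
    (V : EuclideanSpace ℝ (Fin n) → ℝ)
    (hVc : ContinuousOn V (closure D))
    (hVd : ContDiffOn ℝ 1 V D)
    (hV0 : V 0 = 0)
    (hVdec : ∀ x ∈ D \ {(0 : EuclideanSpace ℝ (Fin n))}, V x < 1 → fderiv ℝ V x (f x) < 0)
    (hVbd : ∀ x ∈ frontier D, 1 ≤ V x)
    (htraj : ∀ x ∈ D, V x < 1 →
      ∃ X : ℝ → EuclideanSpace ℝ (Fin n), X 0 = x ∧
        (∀ t : ℝ, 0 ≤ t → X t ∈ D) ∧
        (∀ t : ℝ, 0 ≤ t → HasDerivAt X (f (X t)) t)) :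
    ∀ x ∈ D \ {(0 : EuclideanSpace ℝ (Fin n))}, 0 < V x := by
  rintro x ⟨hxD, hx0⟩
  have hnonneg := nonneg_of_lyapunov_decrease hD hDb hf hVc hVd hV0 hVdec hVbd htraj
  refine (hnonneg x hxD).lt_of_ne' fun hVx ↦ ?_
  obtain ⟨X, hX0, hXD, hXd⟩ := htraj x hxD (by simp [hVx])
  have hg := hasDerivAt_comp_of_contDiffOn hD hVd (hXd 0 le_rfl) (hXD 0 le_rfl)
  rw [hX0] at hg
  obtain ⟨t, ht, hlt⟩ := hg.exists_gt_lt_of_neg (hVdec x ⟨hxD, hx0⟩ (by simp [hVx]))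
  exact (hnonneg _ (hXD t ht.le)).not_gt (by simpa [hX0, hVx] using hlt)

/-- Lemma 4 (lem:positive_definite): a continuously differentiable function `V` that
vanishes at the origin, is positive definite in a neighborhood of the origin, satisfies
the decrease condition on the sublevel set `{V < 1}`, is at least `1` on the boundary
of `D`, and such that from every point of `{x ∈ D | V x < 1}` there is a trajectory of
`ẋ = f(x)` staying in `D`, is positive on all of `D \ {0}`. -/
theorem positive_definiteness_from_local
    (n : ℕ) (hn : 1 ≤ n)
    (D : Set (EuclideanSpace ℝ (Fin n))) (hD : IsOpen D)
    (hDb : Bornology.IsBounded D)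
    (h0D : (0 : EuclideanSpace ℝ (Fin n)) ∈ D)
    (f : EuclideanSpace ℝ (Fin n) → EuclideanSpace ℝ (Fin n)) (hf : Continuous f)
    (V : EuclideanSpace ℝ (Fin n) → ℝ)
    (hVc : ContinuousOn V (closure D))
    (hVd : ContDiffOn ℝ 1 V D)
    (hV0 : V 0 = 0)
    (N : Set (EuclideanSpace ℝ (Fin n))) (hN : IsOpen N)
    (h0N : (0 : EuclideanSpace ℝ (Fin n)) ∈ N)
    (hVposN : ∀ x ∈ N \ {(0 : EuclideanSpace ℝ (Fin n))}, 0 < V x)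
    (hVdec : ∀ x ∈ D \ {(0 : EuclideanSpace ℝ (Fin n))}, V x < 1 → fderiv ℝ V x (f x) < 0)
    (hVbd : ∀ x ∈ frontier D, 1 ≤ V x)
    (htraj : ∀ x ∈ D, V x < 1 →
      ∃ X : ℝ → EuclideanSpace ℝ (Fin n), X 0 = x ∧
        (∀ t : ℝ, 0 ≤ t → X t ∈ D) ∧
        (∀ t : ℝ, 0 ≤ t → HasDerivAt X (f (X t)) t)) :
    ∀ x ∈ D \ {(0 : EuclideanSpace ℝ (Fin n))}, 0 < V x :=
  positive_definiteness_from_local_general n D hD hDb f hf V hVc hVd hV0 hVdec hVbd htraj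
end

section
/- Let n ≥ 1, let R ⊆ ℝⁿ be a bounded set with 0 ∈ closure R, and let φ : ℝⁿ → ℝ be continuous on closure R with φ x > 0 for every x ∈ closure R \ {0}. Let Q be a positive definite symmetric bilinear form on ℝⁿ (equivalently a positive definite symmetric matrix) such that the function x ↦ φ x − Q(x, x) is o(‖x‖²) as x → 0. Then for every real p > 2 there exists β > 0 such that φ x ≥ β · ‖x‖^p for all x ∈ closure R. -/
open Filter Topology Asymptotics

lemma coercive_aux (n : ℕ) (hn : 1 ≤ n)
    (Q : EuclideanSpace ℝ (Fin n) →ₗ[ℝ] EuclideanSpace ℝ (Fin n) →ₗ[ℝ] ℝ)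
    (hQpos : ∀ x : EuclideanSpace ℝ (Fin n), x ≠ 0 → 0 < Q x x) :
    ∃ c : ℝ, 0 < c ∧ ∀ x : EuclideanSpace ℝ (Fin n), c * ‖x‖ ^ 2 ≤ Q x x := by
  haveI : Nontrivial (EuclideanSpace ℝ (Fin n)) := by
    apply Module.nontrivial_of_finrank_pos (R := ℝ)
    simp [finrank_euclideanSpace_fin]; omega
  have hcont : Continuous (fun x : EuclideanSpace ℝ (Fin n) => Q x x) := by
    have hL : Continuous (fun x : EuclideanSpace ℝ (Fin n) =>
        LinearMap.toContinuousLinearMap (Q x)) :=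
      (LinearMap.toContinuousLinearMap.toLinearMap.comp Q).continuous_of_finiteDimensional
    exact isBoundedBilinearMap_apply.continuous.comp (hL.prodMk continuous_id)
  have hsne : (Metric.sphere (0 : EuclideanSpace ℝ (Fin n)) 1).Nonempty :=
    NormedSpace.sphere_nonempty.2 zero_le_one
  obtain ⟨u, huS, hmin⟩ := (isCompact_sphere (0 : EuclideanSpace ℝ (Fin n)) 1).exists_isMinOn
    hsne hcont.continuousOn
  have hunorm : ‖u‖ = 1 := by simpa using huS
  have hu0 : u ≠ 0 := by intro h; rw [h] at hunorm; simp at hunorm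
  refine ⟨Q u u, hQpos u hu0, fun x => ?_⟩
  rcases eq_or_ne x 0 with rfl | hx0
  · simp
  · have hnx : (0:ℝ) < ‖x‖ := norm_pos_iff.2 hx0
    set v : EuclideanSpace ℝ (Fin n) := ‖x‖⁻¹ • x with hv
    have hvS : v ∈ Metric.sphere (0 : EuclideanSpace ℝ (Fin n)) 1 := by
      simp [hv, norm_smul, abs_of_pos (inv_pos.2 hnx), inv_mul_cancel₀ hnx.ne']
    have hkey : Q x x = ‖x‖ ^ 2 * Q v v := by
      have : x = ‖x‖ • v := by
        rw [hv, smul_smul, mul_inv_cancel₀ hnx.ne', one_smul]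
      rw [this]
      have hvn : ‖v‖ = 1 := by simpa using hvS
      simp [map_smul, LinearMap.smul_apply, smul_eq_mul, norm_smul, hvn,
        abs_of_pos hnx]
      ring
    rw [hkey, mul_comm]
    exact mul_le_mul_of_nonneg_left (hmin hvS) (sq_nonneg _)

/-- Core analytic claim of Lemma 5 (lem:bound_phi): a continuous positive definite
function `φ` on the closure of a bounded region `R` whose quadratic part at the origin
is positive definite dominates `β‖x‖^p` for some `β > 0`, for any exponent `p > 2`. -/
theorem posdef_dominates_power
    (n : ℕ) (hn : 1 ≤ n)
    (R : Set (EuclideanSpace ℝ (Fin n))) (hRb : Bornology.IsBounded R)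
    (h0R : (0 : EuclideanSpace ℝ (Fin n)) ∈ closure R)
    (φ : EuclideanSpace ℝ (Fin n) → ℝ)
    (hφc : ContinuousOn φ (closure R))
    (hφpos : ∀ x ∈ closure R \ {(0 : EuclideanSpace ℝ (Fin n))}, 0 < φ x)
    (Q : EuclideanSpace ℝ (Fin n) →ₗ[ℝ] EuclideanSpace ℝ (Fin n) →ₗ[ℝ] ℝ)
    (hQsymm : ∀ x y, Q x y = Q y x)
    (hQpos : ∀ x : EuclideanSpace ℝ (Fin n), x ≠ 0 → 0 < Q x x)
    (hlittleo : (fun x => φ x - Q x x) =o[𝓝 (0 : EuclideanSpace ℝ (Fin n))]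
      (fun x => ‖x‖ ^ (2 : ℕ))) :
    ∀ p : ℝ, 2 < p → ∃ β : ℝ, 0 < β ∧ ∀ x ∈ closure R, β * ‖x‖ ^ p ≤ φ x := by
  intro p hp
  obtain ⟨c, hc, hQlb⟩ := coercive_aux n hn Q hQpos
  -- little-o: eventually |φ x - Q x x| ≤ (c/2)‖x‖²
  have hev : ∀ᶠ x in 𝓝 (0 : EuclideanSpace ℝ (Fin n)),
      ‖φ x - Q x x‖ ≤ (c/2) * ‖‖x‖ ^ (2:ℕ)‖ := hlittleo.bound (by linarith)
  rw [Metric.eventually_nhds_iff] at hev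
  obtain ⟨δ, hδ, hball⟩ := hev
  -- lower bound near 0
  have hsmall : ∀ x : EuclideanSpace ℝ (Fin n), ‖x‖ < δ → c/2 * ‖x‖ ^ 2 ≤ φ x := by
    intro x hx
    have h1 : ‖φ x - Q x x‖ ≤ (c/2) * ‖‖x‖ ^ (2:ℕ)‖ := by
      apply hball; simpa [dist_zero_right] using hx
    have h2 : |φ x - Q x x| ≤ (c/2) * ‖x‖ ^ 2 := by
      simpa [abs_of_nonneg (pow_nonneg (norm_nonneg x) 2)] using h1
    have h3 := hQlb x
    have h4 := abs_le.1 h2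
    linarith [h4.1]
  -- bound on closure R
  obtain ⟨r, hr⟩ := hRb.closure.subset_closedBall 0
  set M : ℝ := max r 1 with hM
  have hM1 : (1:ℝ) ≤ M := le_max_right _ _
  have hM0 : (0:ℝ) < M := lt_of_lt_of_le one_pos hM1
  have hMb : ∀ x ∈ closure R, ‖x‖ ≤ M := by
    intro x hx
    have := hr hx
    rw [Metric.mem_closedBall, dist_zero_right] at this
    exact this.trans (le_max_left _ _)
  set δ' : ℝ := min (δ/2) 1 with hδ'
  have hδ'0 : 0 < δ' := lt_min (by linarith) one_pos
  have hδ'1 : δ' ≤ 1 := min_le_right _ _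
  have hδ'δ : δ' < δ := lt_of_le_of_lt (min_le_left _ _) (by linarith)
  -- small-norm bound in terms of ‖x‖^p
  have hsmallp : ∀ x : EuclideanSpace ℝ (Fin n), ‖x‖ ≤ δ' → c/2 * ‖x‖ ^ p ≤ φ x := by
    intro x hx
    have hφx := hsmall x (lt_of_le_of_lt hx hδ'δ)
    have hpow : ‖x‖ ^ p ≤ ‖x‖ ^ 2 := by
      rcases eq_or_lt_of_le (norm_nonneg x) with h0 | h0
      · rw [← h0]
        rw [Real.zero_rpow (by linarith : p ≠ 0)]
        positivity
      · calc ‖x‖ ^ p ≤ ‖x‖ ^ (2:ℝ) :=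
              Real.rpow_le_rpow_of_exponent_ge h0 (hx.trans hδ'1) (le_of_lt hp)
          _ = ‖x‖ ^ 2 := by rw [Real.rpow_two]
    nlinarith
  -- compact far region
  set K : Set (EuclideanSpace ℝ (Fin n)) := closure R ∩ {x | δ' ≤ ‖x‖} with hK
  have hKc : IsCompact K := Metric.isCompact_of_isClosed_isBounded
    (isClosed_closure.inter (isClosed_le continuous_const continuous_norm))
    (hRb.closure.subset Set.inter_subset_left)
  by_cases hKne : K.Nonempty
  · obtain ⟨x₀, hx₀K, hmin⟩ := hKc.exists_isMinOn hKne
      (hφc.mono Set.inter_subset_left)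
    have hx₀0 : x₀ ≠ 0 := by
      intro h
      have := hx₀K.2
      rw [h] at this
      simp only [Set.mem_setOf_eq, norm_zero] at this
      linarith
    have hm : 0 < φ x₀ := hφpos x₀ ⟨hx₀K.1, hx₀0⟩
    have hMp : (0:ℝ) < M ^ p := Real.rpow_pos_of_pos hM0 p
    refine ⟨min (c/2) (φ x₀ / M ^ p), lt_min (by linarith) (div_pos hm hMp), ?_⟩
    intro x hx
    rcases le_or_gt ‖x‖ δ' with hle | hgt
    · calc min (c/2) (φ x₀ / M ^ p) * ‖x‖ ^ p ≤ c/2 * ‖x‖ ^ p := by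
            apply mul_le_mul_of_nonneg_right (min_le_left _ _)
            positivity
        _ ≤ φ x := hsmallp x hle
    · have hxK : x ∈ K := ⟨hx, le_of_lt hgt⟩
      have h1 : φ x₀ ≤ φ x := hmin hxK
      have h2 : ‖x‖ ^ p ≤ M ^ p :=
        Real.rpow_le_rpow (norm_nonneg x) (hMb x hx) (by linarith)
      calc min (c/2) (φ x₀ / M ^ p) * ‖x‖ ^ p ≤ φ x₀ / M ^ p * ‖x‖ ^ p := by
            apply mul_le_mul_of_nonneg_right (min_le_right _ _)
            positivity
        _ ≤ φ x₀ / M ^ p * M ^ p := by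
            apply mul_le_mul_of_nonneg_left h2
            positivity
        _ = φ x₀ := by field_simp
        _ ≤ φ x := h1
  · refine ⟨c/2, by linarith, ?_⟩
    intro x hx
    rcases le_or_gt ‖x‖ δ' with hle | hgt
    · exact hsmallp x hle
    · exact absurd ⟨x, hx, le_of_lt hgt⟩ hKne
end

section
/- Let n ≥ 1, let D ⊆ ℝⁿ be open and bounded with 0 ∈ D, let f : ℝⁿ → ℝⁿ, and let Ṽ : ℝⁿ → ℝ be differentiable on D with Ṽ x ≥ 0 for all x ∈ D. Set R := {x ∈ D | Ṽ x < 1}. Let φ : ℝⁿ → ℝ be continuous on closure R with φ x > 0 for every x ∈ closure R \ {0}, and let Q be a positive definite symmetric bilinear form on ℝⁿ such that x ↦ φ x − Q(x,x) is o(‖x‖²) as x → 0. Assume Zubov's equality holds on R: for every x ∈ R, (fderiv ℝ Ṽ x) (f x) = − φ x · (1 − Ṽ x). Then for every real p > 2 there exists β > 0 such that for all x ∈ R, (fderiv ℝ Ṽ x) (f x) + β · (1 − Ṽ x) · ‖x‖^p ≤ 0. -/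
open Filter Topology Asymptotics

/-- Lemma 5 (lem:bound_phi): if Zubov's equality holds on the basin
`R = {x ∈ D | Ṽ x < 1}` with a positive definite `φ` whose quadratic part at the origin
is positive definite, then for every `p > 2` there is `β > 0` such that the relaxed
Zubov inequality `DV_β(x) ≤ 0` holds on `R`. -/
theorem zubov_equality_implies_relaxed_inequality
    (n : ℕ) (hn : 1 ≤ n)
    (D : Set (EuclideanSpace ℝ (Fin n))) (hD : IsOpen D)
    (hDb : Bornology.IsBounded D)
    (h0D : (0 : EuclideanSpace ℝ (Fin n)) ∈ D)
    (f : EuclideanSpace ℝ (Fin n) → EuclideanSpace ℝ (Fin n))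
    (Vt : EuclideanSpace ℝ (Fin n) → ℝ)
    (hVd : DifferentiableOn ℝ Vt D)
    (hVnonneg : ∀ x ∈ D, 0 ≤ Vt x)
    (φ : EuclideanSpace ℝ (Fin n) → ℝ)
    (hφc : ContinuousOn φ (closure {x ∈ D | Vt x < 1}))
    (hφpos : ∀ x ∈ closure {x ∈ D | Vt x < 1} \ {(0 : EuclideanSpace ℝ (Fin n))}, 0 < φ x)
    (Q : EuclideanSpace ℝ (Fin n) →ₗ[ℝ] EuclideanSpace ℝ (Fin n) →ₗ[ℝ] ℝ)
    (hQsymm : ∀ x y, Q x y = Q y x)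
    (hQpos : ∀ x : EuclideanSpace ℝ (Fin n), x ≠ 0 → 0 < Q x x)
    (hlittleo : (fun x => φ x - Q x x) =o[𝓝 (0 : EuclideanSpace ℝ (Fin n))]
      (fun x => ‖x‖ ^ (2 : ℕ)))
    (hzubov : ∀ x ∈ {x ∈ D | Vt x < 1}, fderiv ℝ Vt x (f x) = - φ x * (1 - Vt x)) :
    ∀ p : ℝ, 2 < p → ∃ β : ℝ, 0 < β ∧
      ∀ x ∈ {x ∈ D | Vt x < 1},
        fderiv ℝ Vt x (f x) + β * (1 - Vt x) * ‖x‖ ^ p ≤ 0 := by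
  intro p hp
  set R : Set (EuclideanSpace ℝ (Fin n)) := {x ∈ D | Vt x < 1} with hRdef
  -- continuity of the quadratic form
  have hQcont : Continuous (fun x : EuclideanSpace ℝ (Fin n) => Q x x) := by
    have hB : Continuous ((LinearMap.toContinuousLinearMap.toLinearMap.comp Q :
        EuclideanSpace ℝ (Fin n) →ₗ[ℝ] (EuclideanSpace ℝ (Fin n) →L[ℝ] ℝ))) :=
      LinearMap.continuous_of_finiteDimensional _
    exact hB.clm_apply continuous_id
  haveI : Nonempty (Fin n) := ⟨⟨0, hn⟩⟩
  haveI : Nontrivial (EuclideanSpace ℝ (Fin n)) := inferInstance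
  -- minimum of Q on the unit sphere
  obtain ⟨x₀, hx₀mem, hx₀min⟩ :=
    (isCompact_sphere (0 : EuclideanSpace ℝ (Fin n)) 1).exists_isMinOn
      (NormedSpace.sphere_nonempty.2 zero_le_one) hQcont.continuousOn
  have hx₀norm : ‖x₀‖ = 1 := by simpa using hx₀mem
  set c : ℝ := Q x₀ x₀ with hcdef
  have hc : 0 < c := hQpos x₀ (by intro h; rw [h] at hx₀norm; simp at hx₀norm)
  -- quadratic lower bound
  have hQlb : ∀ x : EuclideanSpace ℝ (Fin n), c * ‖x‖ ^ 2 ≤ Q x x := by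
    intro x
    rcases eq_or_ne x 0 with rfl | hx
    · simp
    · have hnx : (0 : ℝ) < ‖x‖ := norm_pos_iff.2 hx
      set u : EuclideanSpace ℝ (Fin n) := ‖x‖⁻¹ • x with hu
      have hunorm : ‖u‖ = 1 := by
        rw [hu, norm_smul, norm_inv, norm_norm, inv_mul_cancel₀ hnx.ne']
      have hmin : c ≤ Q u u := hx₀min (by simpa using hunorm)
      have hQu : Q u u = ‖x‖⁻¹ * (‖x‖⁻¹ * Q x x) := by
        rw [hu]; simp [map_smul, LinearMap.smul_apply, smul_eq_mul]
      rw [hQu] at hmin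
      have h2 : c * ‖x‖ ^ 2 ≤ (‖x‖⁻¹ * (‖x‖⁻¹ * Q x x)) * ‖x‖ ^ 2 := by
        apply mul_le_mul_of_nonneg_right hmin (by positivity)
      calc c * ‖x‖ ^ 2 ≤ (‖x‖⁻¹ * (‖x‖⁻¹ * Q x x)) * ‖x‖ ^ 2 := h2
        _ = Q x x * (‖x‖⁻¹ * ‖x‖) ^ 2 := by ring
        _ = Q x x := by rw [inv_mul_cancel₀ hnx.ne']; ring
  -- little-o bound: φ x ≥ (c/2) ‖x‖² near 0
  have hev := hlittleo.def (show (0:ℝ) < c / 2 by positivity)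
  obtain ⟨δ, hδpos, hδ⟩ := Metric.eventually_nhds_iff.mp hev
  -- φ 0 = 0
  have hφ0 : φ 0 = 0 := by
    have h := hδ (show dist (0 : EuclideanSpace ℝ (Fin n)) 0 < δ by simpa using hδpos)
    simp at h
    have : |φ 0 - Q 0 0| ≤ 0 := by simpa using h
    have hQ0 : Q 0 0 = (0:ℝ) := by simp
    rw [hQ0] at this
    have := abs_nonpos_iff.mp this
    linarith [sub_eq_zero.mp this]
  -- compactness of closure R
  have hRsub : R ⊆ D := fun x hx => hx.1
  have hKb : Bornology.IsBounded (closure R) := (hDb.subset hRsub).closure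
  have hKc : IsCompact (closure R) :=
    Metric.isCompact_of_isClosed_isBounded isClosed_closure hKb
  obtain ⟨M₀, hM₀⟩ := hKb.exists_norm_le
  set M : ℝ := max M₀ δ with hMdef
  have hMpos : 0 < M := lt_of_lt_of_le hδpos (le_max_right _ _)
  have hM : ∀ x ∈ closure R, ‖x‖ ≤ M := fun x hx => le_trans (hM₀ x hx) (le_max_left _ _)
  -- min of φ on the annulus
  set S : Set (EuclideanSpace ℝ (Fin n)) := closure R ∩ {x | δ ≤ ‖x‖} with hSdef
  have hSc : IsCompact S := hKc.inter_right (isClosed_le continuous_const continuous_norm)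
  have hm : ∃ m : ℝ, 0 < m ∧ ∀ x ∈ S, m ≤ φ x := by
    rcases S.eq_empty_or_nonempty with hS | hS
    · exact ⟨1, one_pos, by simp [hS]⟩
    · obtain ⟨x₁, hx₁S, hx₁min⟩ := hSc.exists_isMinOn hS (hφc.mono Set.inter_subset_left)
      have hx₁ne : x₁ ≠ 0 := by
        intro h
        have := hx₁S.2
        rw [h] at this
        simp at this
        linarith
      exact ⟨φ x₁, hφpos x₁ ⟨hx₁S.1, hx₁ne⟩, fun x hx => hx₁min hx⟩
  obtain ⟨m, hmpos, hmle⟩ := hm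
  -- choose β
  set β : ℝ := min ((c / 2) / δ ^ (p - 2)) (m / M ^ p) with hβdef
  have hδp : (0:ℝ) < δ ^ (p - 2) := Real.rpow_pos_of_pos hδpos _
  have hMp : (0:ℝ) < M ^ p := Real.rpow_pos_of_pos hMpos _
  have hβpos : 0 < β := lt_min (by positivity) (by positivity)
  refine ⟨β, hβpos, ?_⟩
  -- key bound: β ‖x‖^p ≤ φ x on R
  have key : ∀ x ∈ R, β * ‖x‖ ^ p ≤ φ x := by
    intro x hx
    rcases lt_or_ge ‖x‖ δ with hxδ | hxδ
    · rcases eq_or_ne x 0 with rfl | hxne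
      · rw [hφ0, norm_zero, Real.zero_rpow (by linarith : p ≠ 0), mul_zero]
      · have hnx : (0 : ℝ) < ‖x‖ := norm_pos_iff.2 hxne
        have hbound := hδ (show dist x 0 < δ by simpa using hxδ)
        have habs : |φ x - Q x x| ≤ c / 2 * ‖x‖ ^ 2 := by
          have : ‖(‖x‖ ^ (2:ℕ))‖ = ‖x‖ ^ 2 := by
            rw [Real.norm_eq_abs, abs_of_nonneg (by positivity)]
          simpa [this] using hbound
        have hφlb : c / 2 * ‖x‖ ^ 2 ≤ φ x := by
          have h1 := hQlb x
          have h2 := abs_le.mp habs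
          nlinarith [h2.1, h2.2]
        have hsplit : ‖x‖ ^ p = ‖x‖ ^ (p - 2) * ‖x‖ ^ 2 := by
          rw [← Real.rpow_natCast ‖x‖ 2, ← Real.rpow_add hnx]
          norm_num
        have hle1 : ‖x‖ ^ (p - 2) ≤ δ ^ (p - 2) :=
          Real.rpow_le_rpow (norm_nonneg _) hxδ.le (by linarith)
        have hβle : β ≤ (c / 2) / δ ^ (p - 2) := min_le_left _ _
        calc β * ‖x‖ ^ p = β * (‖x‖ ^ (p - 2) * ‖x‖ ^ 2) := by rw [hsplit]
          _ ≤ ((c / 2) / δ ^ (p - 2)) * (δ ^ (p - 2) * ‖x‖ ^ 2) := by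
              apply mul_le_mul hβle (mul_le_mul_of_nonneg_right hle1 (by positivity))
                (by positivity) (by positivity)
          _ = c / 2 * ‖x‖ ^ 2 := by
              field_simp
          _ ≤ φ x := hφlb
    · have hxS : x ∈ S := ⟨subset_closure hx, hxδ⟩
      have hβle : β ≤ m / M ^ p := min_le_right _ _
      have hxp : ‖x‖ ^ p ≤ M ^ p :=
        Real.rpow_le_rpow (norm_nonneg _) (hM x (subset_closure hx)) (by linarith)
      calc β * ‖x‖ ^ p ≤ (m / M ^ p) * M ^ p := by
            apply mul_le_mul hβle hxp (by positivity) (by positivity)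
        _ = m := by field_simp
        _ ≤ φ x := hmle x hxS
  intro x hx
  have h1 : Vt x < 1 := hx.2
  have h2 : 0 < 1 - Vt x := by linarith
  rw [hzubov x hx]
  have h3 := key x hx
  nlinarith [mul_nonneg h2.le (sub_nonneg.2 h3)]
end

section
/- Let δ ∈ (0,1), ξ > 0, and let a > 0 satisfy ξ·a < 1. Let h : ℝ → ℝ satisfy 0 ≤ h η ≤ 1 for all η ∈ ℝ. Define the sequence η : ℕ → ℝ by η 0 = 1 and η (k+1) = η k + a · (if η k ≤ δ then h (η k) else − ξ · η k). Then there exists K ∈ ℕ such that for all k > K, (1 − ξ·a) · δ ≤ η k ≤ δ + a. -/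
/-- Lemma 7 (lem:eta), abstracted: with constant learning rate `a ∈ (0, ᾱ]`, the
boundary-estimation iterates `η k` eventually remain in `[(1 − ξ·a)·δ, δ + a]`. -/
theorem eta_eventually_near_boundary
    (δ ξ a : ℝ) (hδ0 : 0 < δ) (hδ1 : δ < 1) (hξ : 0 < ξ) (ha : 0 < a)
    (hξa : ξ * a < 1)
    (h : ℝ → ℝ) (hh : ∀ η : ℝ, 0 ≤ h η ∧ h η ≤ 1)
    (η : ℕ → ℝ)
    (hη0 : η 0 = 1)
    (hηrec : ∀ k : ℕ, η (k + 1) = η k + a * (if η k ≤ δ then h (η k) else - (ξ * η k))) :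
    ∃ K : ℕ, ∀ k : ℕ, K < k → (1 - ξ * a) * δ ≤ η k ∧ η k ≤ δ + a := by
  set q : ℝ := 1 - ξ * a with hq
  have hq0 : 0 < q := by simp only [hq]; nlinarith
  have hq1 : q < 1 := by simp only [hq]; nlinarith
  obtain ⟨K, hK⟩ := exists_pow_lt_of_lt_one hδ0 hq1
  have main : ∀ k, (q * δ ≤ η k ∧ η k ≤ δ + a) ∨ (η k = q ^ k ∧ δ < η k) := by
    intro k
    induction k with
    | zero => right; rw [hη0]; exact ⟨by norm_num, hδ1⟩
    | succ k ih =>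
      rcases ih with ⟨hlo, hhi⟩ | ⟨heq, hgt⟩
      · left
        rw [hηrec k]
        by_cases hc : η k ≤ δ
        · rw [if_pos hc]
          obtain ⟨h0, h1⟩ := hh (η k)
          constructor
          · nlinarith
          · nlinarith
        · rw [if_neg hc]
          push_neg at hc
          constructor
          · nlinarith
          · nlinarith
      · have hc : ¬ η k ≤ δ := not_le.mpr hgt
        have hnext : η (k + 1) = q * q ^ k := by
          rw [hηrec k, if_neg hc, heq]; ring
        by_cases hd : δ < η (k + 1)
        · right
          exact ⟨by rw [hnext, pow_succ, mul_comm], hd⟩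
        · left
          push_neg at hd
          constructor
          · rw [hnext]
            have : δ < q ^ k := heq ▸ hgt
            nlinarith
          · nlinarith
  refine ⟨K, fun k hk => ?_⟩
  rcases main k with hS | ⟨heq, hgt⟩
  · exact hS
  · exfalso
    have : q ^ k ≤ q ^ K :=
      pow_le_pow_of_le_one (le_of_lt hq0) (le_of_lt hq1) (le_of_lt hk)
    nlinarith [heq ▸ hgt]
end

section
/- Let δ ∈ (0,1), ξ > 0, and ᾱ > 0 with ξ·ᾱ < 1. Let α : ℕ → ℝ be strictly decreasing with 0 < α k ≤ ᾱ for all k, α k → 0 as k → ∞, and ∑ₖ α k = ∞ (the partial sums diverge). Let h : ℝ → ℝ be continuous with 0 ≤ h η ≤ 1 for all η and h η > 0 for all η ∈ [(1 − ξ·ᾱ)·δ, δ). Define η : ℕ → ℝ by η 0 = 1 and η (k+1) = η k + α k · (if η k ≤ δ then h (η k) else − ξ · η k). Then η k → δ as k → ∞. -/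
open Filter Topology

set_option maxHeartbeats 1000000

/-- Proposition following Lemma 7: with strictly decreasing step sizes `α k ∈ (0, ᾱ]`
tending to `0` with divergent partial sums, and `h` continuous, valued in `[0,1]`, and
positive on `[(1 − ξ·ᾱ)·δ, δ)`, the boundary-estimation iterates converge to `δ`. -/
theorem eta_tendsto_boundary
    (δ ξ abar : ℝ) (hδ0 : 0 < δ) (hδ1 : δ < 1) (hξ : 0 < ξ) (habar : 0 < abar)
    (hξa : ξ * abar < 1)
    (α : ℕ → ℝ) (hα_anti : StrictAnti α)
    (hα_pos : ∀ k : ℕ, 0 < α k) (hα_le : ∀ k : ℕ, α k ≤ abar)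
    (hα_lim : Tendsto α atTop (𝓝 0))
    (hα_div : Tendsto (fun N : ℕ => ∑ k ∈ Finset.range N, α k) atTop atTop)
    (h : ℝ → ℝ) (hh_cont : Continuous h)
    (hh : ∀ η : ℝ, 0 ≤ h η ∧ h η ≤ 1)
    (hh_pos : ∀ η ∈ Set.Ico ((1 - ξ * abar) * δ) δ, 0 < h η)
    (η : ℕ → ℝ)
    (hη0 : η 0 = 1)
    (hηrec : ∀ k : ℕ, η (k + 1) = η k + α k * (if η k ≤ δ then h (η k) else - (ξ * η k))) :
    Tendsto η atTop (𝓝 δ) := by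
  set L : ℝ := (1 - ξ * abar) * δ with hLdef
  set M : ℝ := max 1 (δ + abar) with hMdef
  have hLpos : 0 < L := mul_pos (by linarith) hδ0
  have hLδ : L < δ := by
    have h1 : 0 < ξ * abar := mul_pos hξ habar
    nlinarith
  have hM1 : (1:ℝ) ≤ M := le_max_left _ _
  have hMδa : δ + abar ≤ M := le_max_right _ _
  have hδM : δ < M := by linarith
  have hMpos : 0 < M := by linarith
  -- Invariant: L ≤ η k ≤ M
  have hinv : ∀ k, L ≤ η k ∧ η k ≤ M := by
    intro k
    induction k with
    | zero => rw [hη0]; exact ⟨by linarith, hM1⟩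
    | succ k ih =>
      obtain ⟨hl, hu⟩ := ih
      rcases le_or_gt (η k) δ with hc | hc
      · rw [hηrec k, if_pos hc]
        have h0 := (hh (η k)).1
        have h1 := (hh (η k)).2
        have hα := hα_pos k
        have hαa := hα_le k
        constructor
        · nlinarith
        · nlinarith
      · rw [hηrec k, if_neg (not_le.mpr hc)]
        have hα := hα_pos k
        have hαa := hα_le k
        have hfac : 1 - ξ * abar ≤ 1 - ξ * α k := by nlinarith
        have hfacpos : 0 < 1 - ξ * abar := by linarith
        constructor
        · -- L = (1-ξ abar)*δ ≤ η k * (1 - ξ α k)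
          have : η k * (1 - ξ * abar) ≤ η k * (1 - ξ * α k) :=
            mul_le_mul_of_nonneg_left hfac (by linarith)
          have h2 : δ * (1 - ξ * abar) ≤ η k * (1 - ξ * abar) :=
            mul_le_mul_of_nonneg_right hc.le hfacpos.le
          nlinarith
        · have h2 : 0 < α k * (ξ * η k) := mul_pos hα (mul_pos hξ (lt_trans hδ0 hc))
          linarith
  rw [Metric.tendsto_atTop]
  intro ε hε
  set ε' : ℝ := min (ε/2) ((δ - L)/2) with hε'def
  have hε'pos : 0 < ε' := lt_min (by linarith) (by linarith)
  have hε'ε : ε' < ε := lt_of_le_of_lt (min_le_left _ _) (by linarith)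
  have hε'L : L < δ - ε' := by
    have := min_le_right (ε/2) ((δ - L)/2)
    rw [← hε'def] at this
    linarith
  -- minimum of h on [L, δ - ε']
  obtain ⟨x0, hx0mem, hx0min⟩ :=
    isCompact_Icc.exists_isMinOn (Set.nonempty_Icc.mpr (by linarith : L ≤ δ - ε'))
      hh_cont.continuousOn
  set m : ℝ := h x0 with hmdef
  have hmpos : 0 < m := hh_pos x0 ⟨hx0mem.1, by linarith [hx0mem.2]⟩
  have hmle : ∀ x ∈ Set.Icc L (δ - ε'), m ≤ h x := fun x hx => hx0min hx
  -- small step threshold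
  set c : ℝ := min ε' (ε' / (ξ * M)) with hcdef
  have hcpos : 0 < c := lt_min hε'pos (div_pos hε'pos (mul_pos hξ hMpos))
  obtain ⟨N0, hN0⟩ := (hα_lim.eventually (gt_mem_nhds hcpos)).exists_forall_of_atTop
  have hsmall1 : ∀ k, N0 ≤ k → α k ≤ ε' :=
    fun k hk => le_trans (hN0 k hk).le (min_le_left _ _)
  have hsmall2 : ∀ k, N0 ≤ k → ξ * α k * M ≤ ε' := by
    intro k hk
    have h1 : α k ≤ ε' / (ξ * M) := le_trans (hN0 k hk).le (min_le_right _ _)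
    have h2 : ξ * α k * M ≤ ξ * (ε' / (ξ * M)) * M := by
      have := mul_le_mul_of_nonneg_left h1 hξ.le
      nlinarith
    calc ξ * α k * M ≤ ξ * (ε' / (ξ * M)) * M := h2
      _ = ε' := by field_simp
  -- absorbing interval
  have hstay : ∀ k, N0 ≤ k → |η k - δ| ≤ ε' → |η (k+1) - δ| ≤ ε' := by
    intro k hk hek
    rw [abs_le] at hek ⊢
    obtain ⟨hl, hu⟩ := hek
    have hα := hα_pos k
    rcases le_or_gt (η k) δ with hc' | hc'
    · rw [hηrec k, if_pos hc']
      have h0 := (hh (η k)).1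
      have h1 := (hh (η k)).2
      have hs := hsmall1 k hk
      have h2 : 0 ≤ α k * h (η k) := mul_nonneg hα.le h0
      have h3 : α k * h (η k) ≤ α k := mul_le_of_le_one_right hα.le h1
      constructor
      · linarith
      · linarith
    · rw [hηrec k, if_neg (not_le.mpr hc')]
      have hs := hsmall2 k hk
      have hMk := (hinv k).2
      have h4 : ξ * α k * η k ≤ ξ * α k * M := by
        apply mul_le_mul_of_nonneg_left hMk
        positivity
      have h5 : α k * -(ξ * η k) = -(ξ * α k * η k) := by ring
      have h6 : 0 ≤ ξ * α k * η k := le_of_lt (mul_pos (mul_pos hξ hα) (lt_trans hδ0 hc'))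
      constructor
      · linarith
      · linarith
  -- Part (a): exists k1 ≥ N0 with η k1 ≤ δ
  have parta : ∃ k1, N0 ≤ k1 ∧ η k1 ≤ δ := by
    by_contra hcon
    push_neg at hcon
    have hgt : ∀ k, N0 ≤ k → δ < η k := fun k hk => hcon k hk
    have hb : ∀ n, η (N0 + n) ≤ M * Real.exp (-(ξ * ∑ j ∈ Finset.range n, α (N0 + j))) := by
      intro n
      induction n with
      | zero => simpa using (hinv N0).2
      | succ n ih =>
        have hgt' : δ < η (N0 + n) := hgt _ (Nat.le_add_right _ _)
        have hrec : η (N0 + (n+1)) = η (N0 + n) * (1 - ξ * α (N0 + n)) := by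
          have : N0 + (n + 1) = (N0 + n) + 1 := rfl
          rw [this, hηrec (N0 + n), if_neg (not_le.mpr hgt')]
          ring
        rw [hrec]
        have hαa := hα_le (N0 + n)
        have hα := hα_pos (N0 + n)
        have hfac0 : (0:ℝ) ≤ 1 - ξ * α (N0 + n) := by nlinarith
        have hfacexp : 1 - ξ * α (N0 + n) ≤ Real.exp (-(ξ * α (N0 + n))) := by
          have := Real.add_one_le_exp (-(ξ * α (N0 + n)))
          linarith
        have hB0 : (0:ℝ) ≤ M * Real.exp (-(ξ * ∑ j ∈ Finset.range n, α (N0 + j))) := by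
          positivity
        calc η (N0 + n) * (1 - ξ * α (N0 + n))
            ≤ (M * Real.exp (-(ξ * ∑ j ∈ Finset.range n, α (N0 + j)))) * (1 - ξ * α (N0 + n)) :=
              mul_le_mul_of_nonneg_right ih hfac0
          _ ≤ (M * Real.exp (-(ξ * ∑ j ∈ Finset.range n, α (N0 + j)))) * Real.exp (-(ξ * α (N0 + n))) :=
              mul_le_mul_of_nonneg_left hfacexp hB0
          _ = M * Real.exp (-(ξ * ∑ j ∈ Finset.range (n+1), α (N0 + j))) := by
              rw [mul_assoc, ← Real.exp_add, Finset.sum_range_succ]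
              congr 2
              ring
    -- the tail sums diverge
    have hS : Tendsto (fun n => ∑ j ∈ Finset.range n, α (N0 + j)) atTop atTop := by
      have h1 : Tendsto (fun n => ∑ k ∈ Finset.range (N0 + n), α k) atTop atTop :=
        hα_div.comp (by simpa [Nat.add_comm] using tendsto_add_atTop_nat N0)
      have h2 : ∀ n, ∑ j ∈ Finset.range n, α (N0 + j)
          = (∑ k ∈ Finset.range (N0 + n), α k) + (-(∑ k ∈ Finset.range N0, α k)) := by
        intro n
        rw [Finset.sum_range_add]
        ring
      simp only [h2]
      exact tendsto_atTop_add_const_right _ _ h1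
    have hexp : Tendsto (fun n => M * Real.exp (-(ξ * ∑ j ∈ Finset.range n, α (N0 + j))))
        atTop (𝓝 0) := by
      have h1 : Tendsto (fun n => -(ξ * ∑ j ∈ Finset.range n, α (N0 + j))) atTop atBot :=
        tendsto_neg_atTop_atBot.comp (hS.const_mul_atTop hξ)
      have h2 := Real.tendsto_exp_atBot.comp h1
      have := h2.const_mul M
      simpa using this
    obtain ⟨n, hn⟩ := (hexp.eventually (gt_mem_nhds hδ0)).exists
    exact absurd (lt_of_lt_of_le (hgt _ (Nat.le_add_right _ _)) (hb n)) (not_lt.mpr hn.le)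
  obtain ⟨k1, hk1N, hk1δ⟩ := parta
  -- Entry: exists k ≥ N0 with |η k - δ| ≤ ε'
  have entry : ∃ k, N0 ≤ k ∧ |η k - δ| ≤ ε' := by
    rcases le_or_gt (δ - ε') (η k1) with hge | hlt
    · exact ⟨k1, hk1N, abs_le.mpr ⟨by linarith, by linarith⟩⟩
    · -- η k1 < δ - ε'; grow until crossing
      have hex : ∃ n, δ - ε' ≤ η (k1 + n) := by
        by_contra hcon
        push_neg at hcon
        have hb : ∀ n, η k1 + m * ∑ j ∈ Finset.range n, α (k1 + j) ≤ η (k1 + n) := by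
          intro n
          induction n with
          | zero => simp
          | succ n ih =>
            have hlt' : η (k1 + n) < δ - ε' := hcon n
            have hle' : η (k1 + n) ≤ δ := by linarith
            have hmem : η (k1 + n) ∈ Set.Icc L (δ - ε') := ⟨(hinv _).1, hlt'.le⟩
            have hm' := hmle _ hmem
            have hrec : η (k1 + (n+1)) = η (k1 + n) + α (k1 + n) * h (η (k1 + n)) := by
              have : k1 + (n + 1) = (k1 + n) + 1 := rfl
              rw [this, hηrec (k1 + n), if_pos hle']
            rw [hrec, Finset.sum_range_succ]
            have hα := hα_pos (k1 + n)
            have : m * α (k1 + n) ≤ h (η (k1 + n)) * α (k1 + n) :=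
              mul_le_mul_of_nonneg_right hm' hα.le
            nlinarith
        have hS : Tendsto (fun n => ∑ j ∈ Finset.range n, α (k1 + j)) atTop atTop := by
          have h1 : Tendsto (fun n => ∑ k ∈ Finset.range (k1 + n), α k) atTop atTop :=
            hα_div.comp (by simpa [Nat.add_comm] using tendsto_add_atTop_nat k1)
          have h2 : ∀ n, ∑ j ∈ Finset.range n, α (k1 + j)
              = (∑ k ∈ Finset.range (k1 + n), α k) + (-(∑ k ∈ Finset.range k1, α k)) := by
            intro n
            rw [Finset.sum_range_add]
            ring
          simp only [h2]
          exact tendsto_atTop_add_const_right _ _ h1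
        have hT : Tendsto (fun n => η k1 + m * ∑ j ∈ Finset.range n, α (k1 + j)) atTop atTop :=
          tendsto_atTop_add_const_left _ _ (hS.const_mul_atTop hmpos)
        obtain ⟨n, hn⟩ := (hT.eventually_gt_atTop M).exists
        exact absurd (lt_of_lt_of_le hn (le_trans (hb n) (hinv _).2)) (lt_irrefl M)
      classical
      let n0 := Nat.find hex
      have hn0spec : δ - ε' ≤ η (k1 + n0) := Nat.find_spec hex
      have hn0pos : n0 ≠ 0 := by
        intro h0
        have := hn0spec
        rw [h0] at this
        simp at this
        linarith
      obtain ⟨n', hn'⟩ := Nat.exists_eq_succ_of_ne_zero hn0pos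
      have hprev : η (k1 + n') < δ - ε' := by
        have := Nat.find_min hex (m := n') (by omega)
        push_neg at this
        exact this
      have hle' : η (k1 + n') ≤ δ := by linarith
      have hrec : η (k1 + n0) = η (k1 + n') + α (k1 + n') * h (η (k1 + n')) := by
        have : k1 + n0 = (k1 + n') + 1 := by omega
        rw [this, hηrec (k1 + n'), if_pos hle']
      have h1 := (hh (η (k1 + n'))).2
      have h0 := (hh (η (k1 + n'))).1
      have hα := hα_pos (k1 + n')
      have hs := hsmall1 (k1 + n') (le_trans hk1N (Nat.le_add_right _ _))
      refine ⟨k1 + n0, le_trans hk1N (Nat.le_add_right _ _), abs_le.mpr ⟨by linarith, ?_⟩⟩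
      rw [hrec]
      nlinarith
  obtain ⟨ke, hkeN, hke⟩ := entry
  have hall : ∀ j, ke ≤ j → |η j - δ| ≤ ε' := by
    intro j hj
    induction j, hj using Nat.le_induction with
    | base => exact hke
    | succ j hj ih => exact hstay j (le_trans hkeN hj) ih
  refine ⟨ke, fun j hj => ?_⟩
  have := hall j hj
  rw [Real.dist_eq]
  linarith
end

section
/- Let n ≥ 1 and let I := {i : Fin n → ℕ | ∑ₖ i k = 3} be the set of multi-indices of total degree 3. Let H be a symmetric positive definite bilinear form on ℝⁿ and define V₂ x := (1/2) · H(x, x). Define S x := ∑_{i ∈ I} ∏ₖ |x k|^(i k). Let V₃, V̂₃ : ℝⁿ → ℝ, let χ > 0 and 0 ≤ ε₂ ≤ 1, and assume that for every x with ‖x‖ ≤ χ: 3 · |V₃ x| ≤ V₂ x, 3 · S x ≤ V₂ x, and |V̂₃ x − V₃ x| ≤ ε₂ · S x. Then for every x with ‖x‖ ≤ χ, V₂ x + V̂₃ x ≥ (1/3) · V₂ x; in particular V₂ x + V̂₃ x > 0 whenever 0 < ‖x‖ ≤ χ. -/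
/-- Positive-definiteness step in the proof of Theorem 3: near the origin the quadratic
part `V₂(x) = ½ H(x,x)` dominates both the true third-order remainder `V₃` and the
neural remainder `V̂₃`, so `V₂ + V̂₃ ≥ V₂/3` and hence `V₂ + V̂₃` is positive on the
punctured ball of radius `χ`. -/
theorem quadratic_dominates_remainder
    (n : ℕ) (hn : 1 ≤ n)
    (H : EuclideanSpace ℝ (Fin n) →ₗ[ℝ] EuclideanSpace ℝ (Fin n) →ₗ[ℝ] ℝ)
    (hHsymm : ∀ x y, H x y = H y x)
    (hHpos : ∀ x : EuclideanSpace ℝ (Fin n), x ≠ 0 → 0 < H x x)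
    (V₃ Vhat₃ : EuclideanSpace ℝ (Fin n) → ℝ)
    (χ : ℝ) (hχ : 0 < χ)
    (ε₂ : ℝ) (hε₂0 : 0 ≤ ε₂) (hε₂1 : ε₂ ≤ 1)
    (hV₃ : ∀ x : EuclideanSpace ℝ (Fin n), ‖x‖ ≤ χ →
      3 * |V₃ x| ≤ (1 / 2) * H x x)
    (hS : ∀ x : EuclideanSpace ℝ (Fin n), ‖x‖ ≤ χ →
      3 * (∑ i ∈ Finset.Nat.antidiagonalTuple n 3, ∏ k : Fin n, |x k| ^ (i k))
        ≤ (1 / 2) * H x x)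
    (happrox : ∀ x : EuclideanSpace ℝ (Fin n), ‖x‖ ≤ χ →
      |Vhat₃ x - V₃ x| ≤
        ε₂ * (∑ i ∈ Finset.Nat.antidiagonalTuple n 3, ∏ k : Fin n, |x k| ^ (i k))) :
    ∀ x : EuclideanSpace ℝ (Fin n), ‖x‖ ≤ χ →
      (1 / 3) * ((1 / 2) * H x x) ≤ (1 / 2) * H x x + Vhat₃ x ∧
      (0 < ‖x‖ → 0 < (1 / 2) * H x x + Vhat₃ x) := by
  intro x hx
  have h1 := hV₃ x hx
  have h2 := hS x hx
  have h3 := happrox x hx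
  set S := ∑ i ∈ Finset.Nat.antidiagonalTuple n 3, ∏ k : Fin n, |x k| ^ (i k) with hSdef
  have habs1 : -|V₃ x| ≤ V₃ x := neg_abs_le _
  have habs2 : -(ε₂ * S) ≤ Vhat₃ x - V₃ x := neg_le_of_abs_le h3
  have hSnonneg : 0 ≤ S := by
    rw [hSdef]; positivity
  have hεS : ε₂ * S ≤ S := by nlinarith
  have hmain : (1 / 3) * ((1 / 2) * H x x) ≤ (1 / 2) * H x x + Vhat₃ x := by linarith
  refine ⟨hmain, fun hx0 => ?_⟩
  have hxne : x ≠ 0 := by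
    intro h; rw [h] at hx0; simp at hx0
  have := hHpos x hxne
  linarith
end
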